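/- arXiv:2104.14652 — 3 statements merged into one kernel-verified Lean document; each statement's English description precedes it below -/
import Mathlib

section
/- For τ ≥ 0, k a natural number, and C = τ/2, the k-th Chebyshev coefficient of the function t ↦ exp(−τ(t+1)) on [−1,1], defined by c_k(τ) = (2/π) ∫₀^π cos(kθ) exp(−τ(cos θ + 1)) dθ, equals (−1)^k · 2 C^k exp(−τ)/k! · Σ_{i=0}^∞ C^(2i) k!/(i!(k+i)!). -/
/-- The `k`-th Chebyshev coefficient of `t ↦ exp (-τ (t+1))` on `[-1,1]`. -/
noncomputable def chebCoeff (τ : ℝ) (k : ℕ) : ℝ :=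
  (2 / Real.pi) * ∫ θ in (0:ℝ)..Real.pi,
    Real.cos (k * θ) * Real.exp (-τ * (Real.cos θ + 1))

/-!
Expand `exp (-τ cos θ)` in its power series and integrate term by term against `cos (k θ)`
(dominated convergence, since `|cos θ| ≤ 1`). The moment `∫₀^π cos (k θ) cos θ ^ n dθ` vanishes
unless `n = k + 2 i`, where it is `π 2⁻ⁿ (n choose i)`; this follows by induction on `n` from
`2 cos ((k+1) θ) cos θ = cos ((k+2) θ) + cos (k θ)` and Pascal's rule. Since
`(k + 2i choose i) / (k + 2i)! = 1 / (i! (k + i)!)`, the surviving terms are those of the claim.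
-/

open Real MeasureTheory
open scoped Nat

/-- The value of `∫₀^π cos (k θ) cos θ ^ n dθ`: expanding `cos θ ^ n = 2⁻ⁿ (e^{iθ} + e^{-iθ}) ^ n`,
only the terms `e^{±ikθ}` survive, which requires `n = k + 2 i`. -/
noncomputable def cosPowMoment (k n : ℕ) : ℝ :=
  if k ≤ n ∧ (n - k) % 2 = 0 then π / 2 ^ n * n.choose ((n - k) / 2) else 0

lemma cosPowMoment_add_two_mul (k i : ℕ) :
    cosPowMoment k (k + 2 * i) = π / 2 ^ (k + 2 * i) * (k + 2 * i).choose i := by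
  rw [cosPowMoment, if_pos ⟨by omega, by omega⟩, show (k + 2 * i - k) / 2 = i by omega]

lemma cosPowMoment_eq_zero {k n : ℕ} (h : ¬∃ i, n = k + 2 * i) : cosPowMoment k n = 0 := by
  rw [cosPowMoment, if_neg]
  rintro ⟨hkn, hpar⟩
  exact h ⟨(n - k) / 2, by omega⟩

lemma cosPowMoment_zero_right (k : ℕ) : cosPowMoment k 0 = if k = 0 then π else 0 := by
  split_ifs with hk
  · simpa [hk] using cosPowMoment_add_two_mul 0 0
  · exact cosPowMoment_eq_zero fun ⟨i, hi⟩ => hk (by omega)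

lemma cosPowMoment_succ_succ (k n : ℕ) :
    cosPowMoment (k + 1) (n + 1) = (cosPowMoment (k + 2) n + cosPowMoment k n) / 2 := by
  by_cases h : ∃ i, n = k + 2 * i
  · obtain ⟨i, rfl⟩ := h
    rw [show k + 2 * i + 1 = k + 1 + 2 * i by omega, cosPowMoment_add_two_mul,
      cosPowMoment_add_two_mul]
    rcases i with _ | i
    · rw [cosPowMoment_eq_zero fun ⟨j, hj⟩ => by omega]
      simp only [mul_zero, add_zero, pow_succ, Nat.choose_zero_right, Nat.cast_one, mul_one,
        zero_add]
      ring
    · rw [show k + 2 * (i + 1) = k + 2 + 2 * i by omega, cosPowMoment_add_two_mul,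
        show k + 1 + 2 * (i + 1) = (k + 2 + 2 * i) + 1 by omega, Nat.choose_succ_succ]
      push_cast
      ring
  · rw [cosPowMoment_eq_zero fun ⟨j, hj⟩ => h ⟨j, by omega⟩,
      cosPowMoment_eq_zero fun ⟨j, hj⟩ => h ⟨j + 1, by omega⟩, cosPowMoment_eq_zero h]
    norm_num

lemma cosPowMoment_zero_succ (n : ℕ) : cosPowMoment 0 (n + 1) = cosPowMoment 1 n := by
  by_cases h : ∃ i, n = 1 + 2 * i
  · obtain ⟨i, rfl⟩ := h
    rw [cosPowMoment_add_two_mul, show 1 + 2 * i + 1 = 0 + 2 * (i + 1) by omega,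
      cosPowMoment_add_two_mul, show 0 + 2 * (i + 1) = (1 + 2 * i) + 1 by omega,
      Nat.choose_succ_succ,
      ← Nat.choose_symm_of_eq_add (show 1 + 2 * i = i + (i + 1) by omega)]
    push_cast
    ring
  · rw [cosPowMoment_eq_zero fun ⟨j, hj⟩ => h ⟨j - 1, by omega⟩, cosPowMoment_eq_zero h]

lemma cosPowMoment_add_two_mul_div_factorial (k i : ℕ) :
    cosPowMoment k (k + 2 * i) / (k + 2 * i)! = π / 2 ^ (k + 2 * i) / (i ! * (k + i)!) := by
  rw [cosPowMoment_add_two_mul, Nat.cast_choose ℝ (by omega : i ≤ k + 2 * i),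
    show k + 2 * i - i = k + i by omega]
  field_simp

lemma integral_cos_nat_mul (k : ℕ) :
    ∫ θ in (0:ℝ)..π, cos (k * θ) = if k = 0 then π else 0 := by
  split_ifs with hk
  · simp [hk]
  · have hk' : (k : ℝ) ≠ 0 := Nat.cast_ne_zero.mpr hk
    simp [intervalIntegral.integral_comp_mul_left cos hk', sin_nat_mul_pi]

lemma integral_cos_nat_mul_mul_cos_pow (n k : ℕ) :
    ∫ θ in (0:ℝ)..π, cos (k * θ) * cos θ ^ n = cosPowMoment k n := by
  induction n generalizing k with
  | zero => simpa [cosPowMoment_zero_right] using integral_cos_nat_mul k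
  | succ n ih =>
    rcases k with _ | k
    · rw [cosPowMoment_zero_succ, ← ih 1]
      simp only [Nat.cast_zero, Nat.cast_one, zero_mul, one_mul, cos_zero, pow_succ']
    · have hprod : ∀ θ, cos ((k + 1 : ℕ) * θ) * cos θ ^ (n + 1) =
          (cos ((k + 2 : ℕ) * θ) * cos θ ^ n + cos (k * θ) * cos θ ^ n) / 2 := fun θ => by
        have := two_mul_cos_mul_cos ((k + 1 : ℕ) * θ) θ
        push_cast at this ⊢
        rw [pow_succ, show (k + 2 : ℝ) * θ = (k + 1) * θ + θ by ring,
          show (k : ℝ) * θ = (k + 1) * θ - θ by ring]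
        linear_combination cos θ ^ n / 2 * this
      have hint : ∀ j : ℕ,
          IntervalIntegrable (fun θ => cos (j * θ) * cos θ ^ n) volume 0 π :=
        fun j => (by fun_prop : Continuous _).intervalIntegrable _ _
      rw [intervalIntegral.integral_congr fun θ _ => hprod θ, intervalIntegral.integral_div,
        intervalIntegral.integral_add (hint _) (hint _), ih, ih, cosPowMoment_succ_succ]

lemma hasSum_intervalIntegral_mul_exp_mul {f g : ℝ → ℝ} (hf : Continuous f) (hg : Continuous g)
    (hg_le : ∀ x, |g x| ≤ 1) (c a b : ℝ) :
    HasSum (fun n : ℕ => c ^ n / n ! * ∫ x in a..b, f x * g x ^ n)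
      (∫ x in a..b, f x * exp (c * g x)) := by
  have hterm : ∀ n : ℕ, c ^ n / n ! * ∫ x in a..b, f x * g x ^ n =
      ∫ x in a..b, f x * ((c * g x) ^ n / n !) := fun n => by
    rw [← intervalIntegral.integral_const_mul]
    congr with x
    ring
  simp_rw [hterm]
  refine intervalIntegral.hasSum_integral_of_dominated_convergence
    (fun n x => |f x| * (|c| ^ n / n !))
    (fun n => (by fun_prop : Continuous _).aestronglyMeasurable)
    (fun n => ae_of_all _ fun x _ => ?_)
    (ae_of_all _ fun x _ => (summable_pow_div_factorial |c|).mul_left _) ?_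
    (ae_of_all _ fun x _ => ?_)
  · rw [norm_mul, norm_div, norm_pow, norm_mul, Real.norm_eq_abs, Real.norm_eq_abs,
      Real.norm_eq_abs, RCLike.norm_natCast, mul_pow]
    gcongr
    exact mul_le_of_le_one_right (by positivity) (pow_le_one₀ (abs_nonneg _) (hg_le x))
  · simp_rw [tsum_mul_left]
    exact (by fun_prop : Continuous _).intervalIntegrable _ _
  · have := (NormedSpace.expSeries_div_hasSum_exp (c * g x)).mul_left (f x)
    rwa [← Real.exp_eq_exp_ℝ] at this

lemma chebCoeff_eq_mul_integral (τ : ℝ) (k : ℕ) :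
    chebCoeff τ k = 2 / π * exp (-τ) * ∫ θ in (0:ℝ)..π, cos (k * θ) * exp (-τ * cos θ) := by
  rw [chebCoeff, mul_assoc, ← intervalIntegral.integral_const_mul (exp (-τ))]
  congr 1
  refine intervalIntegral.integral_congr fun θ _ => ?_
  rw [mul_add, mul_one, exp_add]
  ring

lemma hasSum_integral_cos_mul_exp_mul_cos (c : ℝ) (k : ℕ) :
    HasSum (fun i : ℕ => c ^ (k + 2 * i) / (k + 2 * i)! * cosPowMoment k (k + 2 * i))
      (∫ θ in (0:ℝ)..π, cos (k * θ) * exp (c * cos θ)) := by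
  have hseries := hasSum_intervalIntegral_mul_exp_mul (f := fun θ => cos (k * θ)) (by fun_prop)
    continuous_cos abs_cos_le_one c 0 π
  simp only [integral_cos_nat_mul_mul_cos_pow] at hseries
  have hinj : Function.Injective fun i : ℕ => k + 2 * i := fun i j h => by simp only at h; omega
  rw [← hinj.hasSum_iff fun n hn => by
    rw [cosPowMoment_eq_zero fun ⟨i, hi⟩ => hn ⟨i, hi.symm⟩, mul_zero]] at hseries
  exact hseries

theorem stmt_5_general (τ : ℝ) (k : ℕ) :
    chebCoeff τ k =
      (-1) ^ k * (2 * (τ / 2) ^ k * Real.exp (-τ) / k.factorial) *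
        ∑' i : ℕ, (τ / 2) ^ (2 * i) * (k.factorial : ℝ) / (i.factorial * (k + i).factorial) := by
  rw [chebCoeff_eq_mul_integral, ← tsum_mul_left,
    ← ((hasSum_integral_cos_mul_exp_mul_cos (-τ) k).mul_left (2 / π * exp (-τ))).tsum_eq]
  congr with i
  rw [div_mul_comm ((-τ) ^ _), cosPowMoment_add_two_mul_div_factorial, neg_pow,
    pow_add (-1 : ℝ), (even_two_mul i).neg_one_pow, mul_one, div_pow, div_pow]
  field_simp
  ring

theorem stmt_5 (τ : ℝ) (hτ : 0 ≤ τ) (k : ℕ) :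
    chebCoeff τ k =
      (-1) ^ k * (2 * (τ / 2) ^ k * Real.exp (-τ) / k.factorial) *
        ∑' i : ℕ, (τ / 2) ^ (2 * i) * (k.factorial : ℝ) / (i.factorial * (k + i).factorial) :=
  stmt_5_general τ k
end

section
/- Let τ ≥ 0, C = τ/2, and let K be a natural number with K > C − 1. Define the Chebyshev coefficients c_k(τ) = (2/π)∫₀^π cos(kθ) exp(−τ(cos θ + 1)) dθ. Then the tail sum Σ_{k=K+1}^∞ |c_k(τ)| is at most 2 exp(C²/(K+2) − 2C) · C^(K+1) / (K! (K+1−C)). -/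
open Real Finset Nat MeasureTheory

theorem integral_cos_intCast_mul (m : ℤ) :
    ∫ θ in (0:ℝ)..π, cos (m * θ) = if m = 0 then π else 0 := by
  split_ifs with hm
  · simp [hm]
  · rw [intervalIntegral.integral_comp_mul_left cos (Int.cast_ne_zero.mpr hm)]
    simp [integral_cos, sin_int_mul_pi]

theorem integral_cos_natCast_mul_mul_cos_intCast_mul {k : ℕ} (hk : k ≠ 0) (m : ℤ) :
    ∫ θ in (0:ℝ)..π, cos (k * θ) * cos (m * θ) =
      if m = k ∨ m = -k then π / 2 else 0 := by
  have product_to_sum (θ : ℝ) : cos (k * θ) * cos (m * θ) =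
      (cos (((k - m : ℤ) : ℝ) * θ) + cos (((k + m : ℤ) : ℝ) * θ)) / 2 := by
    push_cast
    rw [sub_mul, add_mul, cos_sub, cos_add]
    ring
  simp_rw [product_to_sum]
  rw [intervalIntegral.integral_div, intervalIntegral.integral_add
    (by apply Continuous.intervalIntegrable; fun_prop)
    (by apply Continuous.intervalIntegrable; fun_prop),
    integral_cos_intCast_mul, integral_cos_intCast_mul]
  have hk_int : (k : ℤ) ≠ 0 := by exact_mod_cast hk
  split_ifs <;> first | omega | ring

theorem cos_pow_eq_sum (θ : ℝ) (n : ℕ) :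
    cos θ ^ n = ∑ j ∈ range (n + 1),
      (n.choose j / 2 ^ n : ℝ) * cos (((n - 2 * j : ℤ) : ℝ) * θ) := by
  have hexp : (cos θ : ℂ) ^ n = ∑ j ∈ range (n + 1), (n.choose j / 2 ^ n : ℝ) *
      Complex.exp ((((n - 2 * j : ℤ) : ℝ) * θ : ℝ) * Complex.I) := by
    rw [Complex.ofReal_cos, Complex.cos, add_comm, div_pow, add_pow, sum_div]
    refine sum_congr rfl fun j hj => ?_
    have hjn : j ≤ n := Nat.lt_succ_iff.mp (mem_range.mp hj)
    rw [← Complex.exp_nat_mul, ← Complex.exp_nat_mul, ← Complex.exp_add]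
    push_cast [hjn]
    ring_nf
  have hre := congrArg Complex.re hexp
  simpa only [← Complex.ofReal_pow, Complex.ofReal_re, Complex.re_sum, Complex.re_ofReal_mul,
    Complex.exp_ofReal_mul_I_re] using hre

noncomputable def cosMoment (k n : ℕ) : ℝ :=
  ∫ θ in (0:ℝ)..π, cos (k * θ) * cos θ ^ n

theorem cosMoment_eq_sum {k : ℕ} (hk : k ≠ 0) (n : ℕ) :
    cosMoment k n = ∑ j ∈ range (n + 1), (n.choose j / 2 ^ n : ℝ) *
      if (n - 2 * j : ℤ) = k ∨ (n - 2 * j : ℤ) = -k then π / 2 else 0 := by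
  simp_rw [cosMoment, cos_pow_eq_sum, mul_sum, mul_left_comm (cos (k * _))]
  rw [intervalIntegral.integral_finsetSum
    fun j _ => by apply Continuous.intervalIntegrable; fun_prop]
  refine sum_congr rfl fun j _ => ?_
  rw [intervalIntegral.integral_const_mul, integral_cos_natCast_mul_mul_cos_intCast_mul hk]

theorem cosMoment_add_two_mul {k : ℕ} (hk : k ≠ 0) (m : ℕ) :
    cosMoment k (k + 2 * m) = π * (k + 2 * m).choose m / 2 ^ (k + 2 * m) := by
  rw [cosMoment_eq_sum hk]
  -- only `j = m` and its mirror image `j = m + k` contribute, with equal binomial coefficients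
  have hterm : ∀ j ∈ range (k + 2 * m + 1),
      ((k + 2 * m).choose j / 2 ^ (k + 2 * m) : ℝ) *
        (if ((k + 2 * m : ℕ) - 2 * j : ℤ) = k ∨ ((k + 2 * m : ℕ) - 2 * j : ℤ) = -k
          then π / 2 else 0) =
      (if j = m then (k + 2 * m).choose m / 2 ^ (k + 2 * m) * (π / 2) else 0) +
      (if j = m + k then (k + 2 * m).choose m / 2 ^ (k + 2 * m) * (π / 2) else 0) := by
    intro j _
    by_cases hm : j = m
    · subst hm
      rw [if_pos (by omega), if_pos rfl, if_neg (by omega), add_zero]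
    by_cases hmk : j = m + k
    · subst hmk
      rw [if_pos (by omega), if_neg hm, if_pos rfl, zero_add,
        Nat.choose_symm_of_eq_add (show k + 2 * m = (m + k) + m by omega)]
    · rw [if_neg (by omega), if_neg hm, if_neg hmk, mul_zero, add_zero]
  rw [sum_congr rfl hterm, sum_add_distrib, sum_ite_eq', sum_ite_eq',
    if_pos (by simp; omega), if_pos (by simp; omega)]
  ring

theorem cosMoment_eq_zero {k n : ℕ} (hk : k ≠ 0) (hn : n ∉ Set.range (k + 2 * ·)) :
    cosMoment k n = 0 := by
  rw [cosMoment_eq_sum hk]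
  refine sum_eq_zero fun j hj => ?_
  have hjn : j ≤ n := Nat.lt_succ_iff.mp (mem_range.mp hj)
  rw [if_neg, mul_zero]
  rintro (h | h)
  · exact hn ⟨j, by dsimp only; omega⟩
  · exact hn ⟨j - k, by dsimp only; omega⟩

theorem hasSum_pow_div_factorial_exp (x : ℝ) : HasSum (fun n => x ^ n / n !) (exp x) := by
  rw [exp_eq_exp_ℝ]
  exact NormedSpace.expSeries_div_hasSum_exp x

theorem hasSum_pow_div_factorial_mul_cosMoment (k : ℕ) (x : ℝ) :
    HasSum (fun n => x ^ n / n ! * cosMoment k n)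
      (∫ θ in (0:ℝ)..π, cos (k * θ) * exp (x * cos θ)) := by
  have hdom := intervalIntegral.hasSum_integral_of_dominated_convergence
    (F := fun n θ => cos (k * θ) * ((x * cos θ) ^ n / n !))
    (a := 0) (b := π) (μ := volume)
    (fun n _ => |x| ^ n / n !)
    (fun n => by apply Continuous.aestronglyMeasurable; fun_prop)
    (fun n => ae_of_all _ fun θ _ => ?bound)
    (ae_of_all _ fun _ _ => (hasSum_pow_div_factorial_exp |x|).summable)
    intervalIntegrable_const
    (ae_of_all _ fun θ _ => (hasSum_pow_div_factorial_exp (x * cos θ)).mul_left (cos (k * θ)))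
  case bound =>
    rw [norm_mul, norm_div, norm_pow, norm_mul, RCLike.norm_natCast]
    calc ‖cos (k * θ)‖ * ((‖x‖ * ‖cos θ‖) ^ n / n !)
        ≤ 1 * ((|x| * 1) ^ n / n !) := by gcongr <;> simp [abs_cos_le_one]
      _ = |x| ^ n / n ! := by ring
  have hterm (n : ℕ) : ∫ θ in (0:ℝ)..π, cos (k * θ) * ((x * cos θ) ^ n / n !) =
      x ^ n / n ! * cosMoment k n := by
    rw [cosMoment, ← intervalIntegral.integral_const_mul]
    congr 1 with θ
    ring
  simpa only [hterm] using hdom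

-- The sum is `π` times the modified Bessel function `I_k(x)`.
theorem hasSum_integral_cos_mul_exp {k : ℕ} (hk : k ≠ 0) (x : ℝ) :
    HasSum (fun m => π * (x / 2) ^ (k + 2 * m) / (m ! * (k + m)!))
      (∫ θ in (0:ℝ)..π, cos (k * θ) * exp (x * cos θ)) := by
  have hinj : Function.Injective (k + 2 * ·) := fun a b h => by dsimp only at h; omega
  have h := hasSum_pow_div_factorial_mul_cosMoment k x
  rw [← hinj.hasSum_iff fun n hn => by rw [cosMoment_eq_zero hk hn, mul_zero]] at h
  convert h using 2 with m
  rw [Function.comp_apply, cosMoment_add_two_mul hk,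
    Nat.cast_choose ℝ (by omega : m ≤ k + 2 * m), show k + 2 * m - m = k + m by omega, div_pow]
  field_simp

theorem pow_div_factorial_add_le {y : ℝ} (hy : 0 ≤ y) (k j : ℕ) :
    y ^ (k + j) / (k + j)! ≤ y ^ k / k ! * (y / (k + 1)) ^ j := by
  have hfact : (k ! * (k + 1) ^ j : ℝ) ≤ (k + j)! := by
    exact_mod_cast Nat.factorial_mul_pow_le_factorial
  calc y ^ (k + j) / (k + j)! ≤ y ^ (k + j) / (k ! * (k + 1) ^ j) := by gcongr
    _ = y ^ k / k ! * (y / (k + 1)) ^ j := by rw [pow_add, div_pow]; field_simp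

theorem abs_integral_cos_mul_exp_le {k : ℕ} (hk : k ≠ 0) (x : ℝ) :
    |∫ θ in (0:ℝ)..π, cos (k * θ) * exp (x * cos θ)| ≤
      π * ((|x| / 2) ^ k / k !) * exp ((x / 2) ^ 2 / (k + 1)) := by
  refine (hasSum_integral_cos_mul_exp hk x).norm_le_of_bounded
    ((hasSum_pow_div_factorial_exp ((x / 2) ^ 2 / (k + 1))).mul_left _) fun m => ?_
  have hy : 0 ≤ |x| / 2 := by positivity
  calc ‖π * (x / 2) ^ (k + 2 * m) / (m ! * (k + m)!)‖
      = π * ((|x| / 2) ^ m / m !) * ((|x| / 2) ^ (k + m) / (k + m)!) := by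
        rw [norm_div, norm_mul, norm_mul, norm_pow, Real.norm_of_nonneg pi_pos.le,
          Real.norm_eq_abs, abs_div, abs_two, RCLike.norm_natCast, RCLike.norm_natCast]
        ring
    _ ≤ π * ((|x| / 2) ^ m / m !) * ((|x| / 2) ^ k / k ! * (|x| / 2 / (k + 1)) ^ m) := by
        gcongr
        exact pow_div_factorial_add_le hy k m
    _ = π * ((|x| / 2) ^ k / k !) * (((x / 2) ^ 2 / (k + 1)) ^ m / m !) := by
        rw [← sq_abs (x / 2), abs_div, abs_two]
        generalize |x| / 2 = y
        ring

theorem abs_chebCoeff_le {k : ℕ} (hk : k ≠ 0) (τ : ℝ) :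
    |chebCoeff τ k| ≤ 2 * exp (-τ) * ((|τ| / 2) ^ k / k !) * exp ((τ / 2) ^ 2 / (k + 1)) := by
  have hfactor : chebCoeff τ k =
      2 / π * exp (-τ) * ∫ θ in (0:ℝ)..π, cos (k * θ) * exp (-τ * cos θ) := by
    rw [chebCoeff, mul_assoc, ← intervalIntegral.integral_const_mul (exp (-τ))]
    refine congrArg _ (intervalIntegral.integral_congr fun θ _ => ?_)
    rw [mul_add, mul_one, exp_add]
    ring
  have hbound := abs_integral_cos_mul_exp_le hk (-τ)
  rw [abs_neg, neg_div, neg_sq] at hbound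
  rw [hfactor, abs_mul, abs_of_pos (by positivity)]
  calc 2 / π * exp (-τ) * |∫ θ in (0:ℝ)..π, cos (k * θ) * exp (-τ * cos θ)|
      ≤ 2 / π * exp (-τ) * (π * ((|τ| / 2) ^ k / k !) * exp ((τ / 2) ^ 2 / (k + 1))) := by
        gcongr
    _ = 2 * exp (-τ) * ((|τ| / 2) ^ k / k !) * exp ((τ / 2) ^ 2 / (k + 1)) := by
        field_simp

theorem abs_chebCoeff_add_le {τ : ℝ} (hτ : 0 ≤ τ) (K j : ℕ) :
    |chebCoeff τ (K + 1 + j)| ≤ 2 * exp ((τ / 2) ^ 2 / (K + 2) - 2 * (τ / 2)) *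
      ((τ / 2) ^ (K + 1) / (K + 1)!) * (τ / 2 / (K + 1)) ^ j := by
  have hC : 0 ≤ τ / 2 := by positivity
  calc |chebCoeff τ (K + 1 + j)|
      ≤ 2 * exp (-τ) * ((τ / 2) ^ (K + 1 + j) / (K + 1 + j)!) *
          exp ((τ / 2) ^ 2 / ((K + 1 + j : ℕ) + 1)) := by
        simpa only [abs_of_nonneg hτ] using abs_chebCoeff_le (by omega) τ
    _ ≤ 2 * exp (-τ) * ((τ / 2) ^ (K + 1) / (K + 1)! * (τ / 2 / ((K + 1 : ℕ) + 1)) ^ j) *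
          exp ((τ / 2) ^ 2 / (K + 2)) := by
        have hden : (K : ℝ) + 2 ≤ (K + 1 + j : ℕ) + 1 := by
          push_cast
          linarith [(j.cast_nonneg : (0 : ℝ) ≤ j)]
        gcongr ?_ * ?_ * exp (_ / ?_)
        exact pow_div_factorial_add_le hC (K + 1) j
    _ ≤ 2 * exp (-τ) * ((τ / 2) ^ (K + 1) / (K + 1)! * (τ / 2 / (K + 1)) ^ j) *
          exp ((τ / 2) ^ 2 / (K + 2)) := by
        gcongr
        linarith
    _ = _ := by
        rw [sub_eq_add_neg, exp_add, show -(2 * (τ / 2)) = -τ by ring]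
        ring

theorem stmt_9 (τ : ℝ) (hτ : 0 ≤ τ) (K : ℕ) (hK : (K : ℝ) > τ / 2 - 1) :
    ∑' j : ℕ, |chebCoeff τ (K + 1 + j)| ≤
      2 * Real.exp ((τ / 2) ^ 2 / ((K : ℝ) + 2) - 2 * (τ / 2)) *
        (τ / 2) ^ (K + 1) / (K.factorial * ((K : ℝ) + 1 - τ / 2)) := by
  set A := 2 * exp ((τ / 2) ^ 2 / (K + 2) - 2 * (τ / 2)) * ((τ / 2) ^ (K + 1) / (K + 1)!)
    with hA
  set r := τ / 2 / (K + 1) with hr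
  have hr₀ : 0 ≤ r := by positivity
  have hr₁ : r < 1 := by rw [div_lt_one (by positivity)]; linarith
  have hgeom := (hasSum_geometric_of_lt_one hr₀ hr₁).mul_left A
  have hle (j : ℕ) := abs_chebCoeff_add_le hτ K j
  have hsum : Summable fun j => |chebCoeff τ (K + 1 + j)| :=
    .of_nonneg_of_le (fun _ => abs_nonneg _) hle hgeom.summable
  calc ∑' j, |chebCoeff τ (K + 1 + j)| ≤ A * (1 - r)⁻¹ := hasSum_le hle hsum.hasSum hgeom
    _ = _ := by
      have : (K : ℝ) + 1 - τ / 2 ≠ 0 := by linarith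
      rw [hA, hr, Nat.factorial_succ, Nat.cast_mul]
      field_simp
      push_cast
      ring
end

section
/- Let L be a real symmetric PSD n×n matrix with largest eigenvalue 2, τ ≥ 0, C = τ/2, and K > C − 1 a natural number. Let p_K be the degree-K Chebyshev truncation of λ ↦ exp(−τλ) on [0,2], and g(K,τ) = 2 exp(C²/(K+2) − 2C) C^(K+1)/(K!(K+1−C)). Then for every nonzero x ∈ ℝⁿ, ‖exp(−τL)x − p_K(L)x‖₂² / ‖exp(−τL)x‖₂² ≤ g(K,τ)² · exp(4τ). -/
open Matrix

/-- Degree-`K` Chebyshev truncation of `λ ↦ exp (-τ λ)` on `[0,2]`, as a polynomial. -/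
noncomputable def chebTruncPoly (τ : ℝ) (K : ℕ) : Polynomial ℝ :=
  Polynomial.C (chebCoeff τ 0 / 2) +
    ∑ k ∈ Finset.Icc 1 K,
      Polynomial.C (chebCoeff τ k) * (Polynomial.Chebyshev.T ℝ k).comp (Polynomial.X - 1)

/-- The error bound `g(K, τ)`. -/
noncomputable def gBound (K : ℕ) (τ : ℝ) : ℝ :=
  2 * Real.exp ((τ / 2) ^ 2 / ((K : ℝ) + 2) - 2 * (τ / 2)) *
    (τ / 2) ^ (K + 1) / (K.factorial * ((K : ℝ) + 1 - τ / 2))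

/-
Substituting `μ = cos θ + 1`, the Jacobi–Anger expansion
`exp (x cos θ) = I₀(x) + 2 ∑_{k ≥ 1} I_k(x) cos kθ` (the Cauchy product of the exponential series
of `(x/2) e^{iθ}` and `(x/2) e^{-iθ}`, regrouped by `p - q`) together with orthogonality of the
cosines on `[0, π]` gives `c_k(τ) = 2 e^{-τ} I_k(-τ)`. Hence `p_K(μ)` is a partial sum of a cosine
series for `exp (-τ μ)`, and the error is at most the tail `∑_{k > K} 2 e^{-τ} |I_k(-τ)|`. The bound
`|I_k(x)| ≤ (|x|/2)^k / k! · exp ((x/2)² / (k+1))` and a geometric comparison of the tail of the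
exponential series give `g(K, τ)`.

For the matrix, `exp (-τ L)` and `p_K(L)` are functions of `L` in the sense of the functional
calculus, so in an orthonormal eigenbasis they act coordinatewise by the scalar functions at the
eigenvalues `μ ∈ [0, 2]`, where the error is at most `g(K, τ)` and `exp (-τ μ) ≥ exp (-2τ)`.
-/

open Real
open scoped Nat

noncomputable def besselI (k : ℕ) (x : ℝ) : ℝ :=
  ∑' m : ℕ, (x / 2) ^ (2 * m + k) / (m ! * (m + k)!)

theorem Real.hasSum_exp (x : ℝ) : HasSum (fun m : ℕ => x ^ m / m !) (exp x) := by
  rw [exp_eq_exp_ℝ]; exact NormedSpace.expSeries_div_hasSum_exp x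

theorem pow_div_factorial_mul_factorial_le {c : ℝ} (hc : 0 ≤ c) (k m : ℕ) :
    c ^ (2 * m + k) / (m ! * (m + k)!) ≤ c ^ k / k ! * ((c ^ 2 / (k + 1)) ^ m / m !) := by
  have hfac : (k ! * (k + 1) ^ m : ℝ) ≤ (m + k)! := by
    rw [add_comm m k]; exact_mod_cast Nat.factorial_mul_pow_le_factorial
  calc c ^ (2 * m + k) / (m ! * (m + k)!)
      ≤ c ^ (2 * m + k) / (m ! * (k ! * (k + 1) ^ m)) := by gcongr
    _ = c ^ k / k ! * ((c ^ 2 / (k + 1)) ^ m / m !) := by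
      rw [div_pow, ← pow_mul, pow_add, mul_comm 2 m]; field_simp

theorem norm_besselI_term_le (k : ℕ) (x : ℝ) (m : ℕ) :
    ‖(x / 2) ^ (2 * m + k) / (m ! * (m + k)!)‖ ≤
      (|x| / 2) ^ k / k ! * (((x / 2) ^ 2 / (k + 1)) ^ m / m !) := by
  have h := pow_div_factorial_mul_factorial_le (c := |x| / 2) (by positivity) k m
  rw [div_pow |x| 2 2, sq_abs, ← div_pow] at h
  convert h using 1
  rw [norm_div, norm_pow, norm_div, Real.norm_eq_abs, Real.norm_two,
    Real.norm_of_nonneg (by positivity)]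

theorem hasSum_besselI (k : ℕ) (x : ℝ) :
    HasSum (fun m : ℕ => (x / 2) ^ (2 * m + k) / (m ! * (m + k)!)) (besselI k x) :=
  (Summable.of_norm_bounded ((Real.hasSum_exp _).mul_left _).summable
    (norm_besselI_term_le k x)).hasSum

theorem abs_besselI_le (k : ℕ) (x : ℝ) :
    |besselI k x| ≤ (|x| / 2) ^ k / k ! * exp ((x / 2) ^ 2 / (k + 1)) :=
  tsum_of_norm_bounded ((Real.hasSum_exp _).mul_left _) (norm_besselI_term_le k x)

theorem summable_abs_besselI (x : ℝ) : Summable fun k => |besselI k x| := by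
  refine .of_nonneg_of_le (fun _ => abs_nonneg _) (fun k => (abs_besselI_le k x).trans ?_)
    ((Real.summable_pow_div_factorial (|x| / 2)).mul_right (exp ((x / 2) ^ 2)))
  gcongr
  exact div_le_self (sq_nonneg _) (by linarith [(k.cast_nonneg : (0:ℝ) ≤ k)])

theorem abs_besselI_neg_le {τ : ℝ} (hτ : 0 ≤ τ) {K k : ℕ} (hk : K < k) :
    |besselI k (-τ)| ≤ (τ / 2) ^ k / k ! * exp ((τ / 2) ^ 2 / (K + 2)) := by
  have hI := abs_besselI_le k (-τ)
  rw [abs_neg, abs_of_nonneg hτ, neg_div, neg_sq] at hI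
  refine hI.trans (mul_le_mul_of_nonneg_left (exp_le_exp.2 ?_) (by positivity))
  refine div_le_div_of_nonneg_left (sq_nonneg _) (by positivity) ?_
  have : (K : ℝ) + 1 ≤ k := by exact_mod_cast hk
  linarith

open Complex in
theorem mul_cexp_pow_div_factorial_mul (w θ : ℝ) (p q : ℕ) :
    (w * cexp (θ * I)) ^ p / p ! * ((w * cexp (-θ * I)) ^ q / q !) =
      ((w ^ (p + q) / (p ! * q !) : ℝ) : ℂ) * cexp (((p : ℤ) - q : ℤ) * θ * I) := by
  rw [mul_pow, mul_pow, ← Complex.exp_nat_mul, ← Complex.exp_nat_mul, div_mul_div_comm,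
    mul_mul_mul_comm, ← Complex.exp_add]
  push_cast
  ring_nf

def intProdNatEquivNatProdNat : ℤ × ℕ ≃ ℕ × ℕ where
  toFun nq := (nq.2 + nq.1.toNat, nq.2 + (-nq.1).toNat)
  invFun pq := ((pq.1 : ℤ) - pq.2, min pq.1 pq.2)
  left_inv := by rintro ⟨n, q⟩; ext <;> simp; omega
  right_inv := by rintro ⟨p, q⟩; ext <;> simp <;> omega

open Complex in
theorem hasSum_besselI_mul_cexp (x θ : ℝ) :
    HasSum (fun n : ℤ => (besselI n.natAbs x : ℂ) * cexp (n * θ * I)) (cexp (x * Real.cos θ)) := by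
  have hexp (z : ℂ) : HasSum (fun p : ℕ => z ^ p / p !) (cexp z) := by
    rw [Complex.exp_eq_exp_ℂ]; exact NormedSpace.expSeries_div_hasSum_exp z
  have hnorm (z : ℂ) : Summable fun p : ℕ => ‖z ^ p / (p ! : ℂ)‖ := by
    simpa [norm_div, norm_pow] using Real.summable_pow_div_factorial ‖z‖
  set w : ℝ := x / 2
  have hsummable :=
    summable_mul_of_summable_norm (hnorm (w * cexp (θ * I))) (hnorm (w * cexp (-θ * I)))
  have hprod := (hexp (w * cexp (θ * I))).mul (hexp (w * cexp (-θ * I))) hsummable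
  have hsum : cexp (w * cexp (θ * I)) * cexp (w * cexp (-θ * I)) = cexp (x * Real.cos θ) := by
    rw [← Complex.exp_add, ← mul_add, ← Complex.two_cos]; push_cast [w]; ring_nf
  rw [hsum, ← intProdNatEquivNatProdNat.hasSum_iff] at hprod
  refine hprod.prod_fiberwise fun n => ?_
  have hfiber := (Complex.hasSum_ofReal.2 (hasSum_besselI n.natAbs x)).mul_right (cexp (n * θ * I))
  convert hfiber using 2 with q
  simp only [Function.comp_apply, intProdNatEquivNatProdNat, Equiv.coe_fn_mk,
    mul_cexp_pow_div_factorial_mul]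
  obtain ⟨m, rfl | rfl⟩ := Int.eq_nat_or_neg n <;> simp [w] <;> ring

theorem hasSum_besselI_cos (x θ : ℝ) :
    HasSum (fun k : ℕ => (if k = 0 then 1 else 2) * besselI k x * Real.cos (k * θ))
      (exp (x * Real.cos θ)) := by
  have h := (hasSum_besselI_mul_cexp x θ).nat_add_neg.sub (hasSum_ite_eq 0 (besselI 0 x : ℂ))
  rw [Int.natAbs_zero, Int.cast_zero, zero_mul, zero_mul, Complex.exp_zero, mul_one,
    add_sub_cancel_right, ← Complex.ofReal_mul, ← Complex.ofReal_exp] at h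
  refine Complex.hasSum_ofReal.1 (h.congr_fun fun k => ?_)
  rcases eq_or_ne k 0 with rfl | hk
  · simp
  · push_cast [hk]
    rw [Int.natAbs_neg, Int.natAbs_natCast, sub_zero, ← mul_add,
      neg_mul (k : ℂ), ← Complex.two_cos]
    ring

theorem integral_cos_int_mul (m : ℤ) :
    ∫ θ in (0)..π, cos (m * θ) = if m = 0 then π else 0 := by
  split_ifs with hm
  · simp [hm]
  · rw [intervalIntegral.integral_comp_mul_left cos (Int.cast_ne_zero.2 hm), integral_cos]
    simp [sin_int_mul_pi]

theorem integral_cos_nat_mul_mul_cos_nat_mul (j k : ℕ) :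
    ∫ θ in (0)..π, cos (j * θ) * cos (k * θ) =
      if j = k then (if j = 0 then π else π / 2) else 0 := by
  have h (θ : ℝ) : cos (j * θ) * cos (k * θ) =
      (cos (((j - k : ℤ) : ℝ) * θ) + cos (((j + k : ℤ) : ℝ) * θ)) / 2 := by
    push_cast; rw [sub_mul, add_mul, ← two_mul_cos_mul_cos]; ring
  simp_rw [h]
  rw [intervalIntegral.integral_div, intervalIntegral.integral_add
    ((by fun_prop : Continuous _).intervalIntegrable _ _)
    ((by fun_prop : Continuous _).intervalIntegrable _ _),
    integral_cos_int_mul, integral_cos_int_mul]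
  split_ifs <;> first | omega | ring

theorem integral_cos_mul_of_hasSum_cos {a : ℕ → ℝ} (ha : Summable fun k => |a k|) {f : ℝ → ℝ}
    (hf : ∀ θ, HasSum (fun k => a k * cos (k * θ)) (f θ)) (j : ℕ) :
    ∫ θ in (0)..π, cos (j * θ) * f θ = (if j = 0 then π else π / 2) * a j := by
  have hint : HasSum (fun k => ∫ θ in (0)..π, cos (j * θ) * (a k * cos (k * θ)))
      (∫ θ in (0)..π, cos (j * θ) * f θ) := by
    refine intervalIntegral.hasSum_integral_of_dominated_convergence (fun k _ => |a k|)
      (fun k => (by fun_prop : Continuous _).aestronglyMeasurable)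
      (fun k => MeasureTheory.ae_of_all _ fun θ _ => ?_)
      (MeasureTheory.ae_of_all _ fun _ _ => ha) intervalIntegrable_const
      (MeasureTheory.ae_of_all _ fun θ _ => (hf θ).mul_left _)
    calc ‖cos (j * θ) * (a k * cos (k * θ))‖ ≤ 1 * (|a k| * 1) := by
          rw [norm_mul, norm_mul, Real.norm_eq_abs, Real.norm_eq_abs, Real.norm_eq_abs]
          gcongr <;> exact abs_cos_le_one _
      _ = |a k| := by ring
  refine hint.unique ?_
  convert hasSum_ite_eq j ((if j = 0 then π else π / 2) * a j) using 2 with k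
  have hcomm : (fun θ => cos (j * θ) * (a k * cos (k * θ))) =
      fun θ => a k * (cos (j * θ) * cos (k * θ)) := funext fun θ => mul_left_comm _ _ _
  rw [hcomm, intervalIntegral.integral_const_mul, integral_cos_nat_mul_mul_cos_nat_mul]
  rcases eq_or_ne k j with rfl | hkj
  · simp [mul_comm]
  · simp [hkj, hkj.symm]

theorem hasSum_exp_neg_mul_cos_add_one (τ θ : ℝ) :
    HasSum (fun k : ℕ => (if k = 0 then 1 else 2) * exp (-τ) * besselI k (-τ) * cos (k * θ))
      (exp (-τ * (cos θ + 1))) := by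
  have h := (hasSum_besselI_cos (-τ) θ).mul_left (exp (-τ))
  rw [← exp_add, show -τ + -τ * cos θ = -τ * (cos θ + 1) by ring] at h
  exact h.congr_fun fun k => by ring

theorem chebCoeff_eq_besselI (τ : ℝ) (k : ℕ) : chebCoeff τ k = 2 * exp (-τ) * besselI k (-τ) := by
  have hsum : Summable fun k : ℕ => |(if k = 0 then 1 else 2) * exp (-τ) * besselI k (-τ)| := by
    refine .of_nonneg_of_le (fun _ => abs_nonneg _) (fun k => ?_)
      ((summable_abs_besselI (-τ)).mul_left (2 * exp (-τ)))
    rw [abs_mul, abs_mul, abs_of_pos (exp_pos _)]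
    gcongr
    split_ifs <;> norm_num
  rw [chebCoeff, integral_cos_mul_of_hasSum_cos hsum (hasSum_exp_neg_mul_cos_add_one τ)]
  split_ifs <;> field_simp

theorem chebTruncPoly_eval_cos_add_one (τ : ℝ) (K : ℕ) (θ : ℝ) :
    (chebTruncPoly τ K).eval (cos θ + 1) = ∑ k ∈ Finset.range (K + 1),
      (if k = 0 then 1 else 2) * exp (-τ) * besselI k (-τ) * cos (k * θ) := by
  have hrange : Finset.range (K + 1) = insert 0 (Finset.Icc 1 K) := by ext; simp; omega
  rw [hrange, Finset.sum_insert (by simp), chebTruncPoly, Polynomial.eval_add, Polynomial.eval_C,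
    Polynomial.eval_finsetSum, chebCoeff_eq_besselI]
  congr 1
  · simp; ring
  · refine Finset.sum_congr rfl fun k hk => ?_
    have hk0 : k ≠ 0 := by simp at hk; omega
    simp [hk0, chebCoeff_eq_besselI, Polynomial.Chebyshev.T_real_cos]

theorem tsum_pow_div_factorial_nat_add_le {c : ℝ} (hc : 0 ≤ c) {N : ℕ} (hN : c < N + 1) :
    ∑' j, c ^ (j + (N + 1)) / (j + (N + 1))! ≤ c ^ (N + 1) / (N ! * (N + 1 - c)) := by
  have hr : c / (N + 1) < 1 := (div_lt_one (by positivity)).2 hN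
  have hgeo := (hasSum_geometric_of_lt_one (by positivity) hr).mul_left (c ^ (N + 1) / (N + 1)!)
  have hle (j : ℕ) :
      c ^ (j + (N + 1)) / (j + (N + 1))! ≤ c ^ (N + 1) / (N + 1)! * (c / (N + 1)) ^ j := by
    have hfac : ((N + 1)! * (N + 1) ^ j : ℝ) ≤ (j + (N + 1))! := by
      calc ((N + 1)! * (N + 1) ^ j : ℝ) ≤ (N + 1)! * (N + 1 + 1) ^ j := by gcongr; linarith
        _ ≤ (j + (N + 1))! := by
          rw [add_comm j]; exact_mod_cast Nat.factorial_mul_pow_le_factorial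
    calc c ^ (j + (N + 1)) / (j + (N + 1))! ≤ c ^ (j + (N + 1)) / ((N + 1)! * (N + 1) ^ j) := by
          gcongr
      _ = c ^ (N + 1) / (N + 1)! * (c / (N + 1)) ^ j := by
          rw [div_pow, pow_add]; field_simp
  refine (Summable.tsum_le_tsum hle ?_ hgeo.summable).trans_eq ?_
  · exact (summable_nat_add_iff (N + 1)).2 (Real.summable_pow_div_factorial c)
  · rw [hgeo.tsum_eq, Nat.factorial_succ]
    push_cast
    field_simp

theorem abs_exp_neg_mul_sub_eval_chebTruncPoly_le {τ : ℝ} (hτ : 0 ≤ τ) {K : ℕ}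
    (hK : τ / 2 - 1 < K) {μ : ℝ} (hμ₀ : 0 ≤ μ) (hμ₂ : μ ≤ 2) :
    |exp (-τ * μ) - (chebTruncPoly τ K).eval μ| ≤ gBound K τ := by
  obtain ⟨θ, rfl⟩ : ∃ θ, cos θ + 1 = μ :=
    ⟨arccos (μ - 1), by rw [cos_arccos (by linarith) (by linarith)]; ring⟩
  have hs := hasSum_exp_neg_mul_cos_add_one τ θ
  set C := 2 * exp (-τ) * exp ((τ / 2) ^ 2 / (K + 2)) with hC
  have hterm (j : ℕ) : ‖(if j + (K + 1) = 0 then 1 else 2) * exp (-τ) *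
      besselI (j + (K + 1)) (-τ) * cos ((j + (K + 1) : ℕ) * θ)‖ ≤
      C * ((τ / 2) ^ (j + (K + 1)) / (j + (K + 1))!) := by
    rw [if_neg (by omega), Real.norm_eq_abs, abs_mul, abs_mul, abs_mul, abs_two,
      abs_of_pos (exp_pos _)]
    calc _ ≤ 2 * exp (-τ) * ((τ / 2) ^ (j + (K + 1)) / (j + (K + 1))! *
            exp ((τ / 2) ^ 2 / (K + 2))) * 1 := by
          gcongr 2 * exp (-τ) * ?_ * ?_
          · exact abs_besselI_neg_le hτ (by omega)
          · exact abs_cos_le_one _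
      _ = C * ((τ / 2) ^ (j + (K + 1)) / (j + (K + 1))!) := by ring
  rw [chebTruncPoly_eval_cos_add_one, ← hs.tsum_eq, ← hs.summable.sum_add_tsum_nat_add (K + 1),
    add_sub_cancel_left]
  calc _ ≤ C * ∑' j, (τ / 2) ^ (j + (K + 1)) / (j + (K + 1))! := by
        rw [← tsum_mul_left]
        refine tsum_of_norm_bounded (Summable.hasSum ?_) hterm
        exact ((summable_nat_add_iff (K + 1)).2 (Real.summable_pow_div_factorial _)).mul_left C
    _ ≤ C * ((τ / 2) ^ (K + 1) / (K ! * (K + 1 - τ / 2))) := by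
        gcongr
        exact tsum_pow_div_factorial_nat_add_le (by positivity) (by linarith)
    _ = gBound K τ := by
        rw [gBound, hC, exp_sub, show 2 * (τ / 2) = τ by ring, Real.exp_neg]
        ring

theorem sum_sq_mulVec_of_mem_unitary {n : Type*} [Fintype n] [DecidableEq n] {U : Matrix n n ℝ}
    (hU : U ∈ unitary (Matrix n n ℝ)) (w : n → ℝ) : ∑ i, (U *ᵥ w) i ^ 2 = ∑ i, w i ^ 2 := by
  have hUU : Uᵀ * U = 1 := Unitary.star_mul_self_of_mem hU
  have h (v : n → ℝ) : ∑ i, v i ^ 2 = v ⬝ᵥ v := by simp [dotProduct, sq]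
  rw [h, h, dotProduct_mulVec, ← mulVec_transpose, mulVec_mulVec, hUU, one_mulVec]

theorem Matrix.IsHermitian.sum_sq_cfc_mulVec {n : Type*} [Fintype n] [DecidableEq n]
    {A : Matrix n n ℝ} (hA : A.IsHermitian) (f : ℝ → ℝ) (x : n → ℝ) :
    ∑ i, (cfc f A *ᵥ x) i ^ 2 =
      ∑ i, (f (hA.eigenvalues i) * (star (hA.eigenvectorUnitary : Matrix n n ℝ) *ᵥ x) i) ^ 2 := by
  rw [hA.cfc_eq, IsHermitian.cfc, Unitary.conjStarAlgAut_apply, ← mulVec_mulVec, ← mulVec_mulVec,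
    sum_sq_mulVec_of_mem_unitary hA.eigenvectorUnitary.2]
  simp [mulVec_diagonal]

theorem Matrix.IsHermitian.exp_smul_eq_cfc {n : Type*} [Fintype n] [DecidableEq n]
    {A : Matrix n n ℝ} (hA : A.IsHermitian) (t : ℝ) :
    NormedSpace.exp (t • A) = cfc (fun μ => Real.exp (t * μ)) A := by
  rw [show (fun μ => Real.exp (t * μ)) = fun μ => Real.exp (t • μ) from rfl,
    cfc_comp_smul t Real.exp A (ha := hA.isSelfAdjoint)]
  -- Any matrix norm induces the entrywise topology, so it does not change `NormedSpace.exp`.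
  let _ := Matrix.linftyOpNormedRing (n := n) (α := ℝ)
  let _ := Matrix.linftyOpNormedAlgebra (n := n) (R := ℝ) (α := ℝ)
  exact (@CFC.real_exp_eq_normedSpace_exp _ _ _ _ IsHermitian.instContinuousFunctionalCalculus _
    ((IsSelfAdjoint.all t).smul hA.isSelfAdjoint)).symm

theorem sum_sq_mul_div_sum_sq_mul_le {ι : Type*} [Fintype ι] {a b y : ι → ℝ} {g m : ℝ}
    (hm : 0 < m) (ha : ∀ i, |a i| ≤ g) (hb : ∀ i, m ≤ b i) :
    (∑ i, (a i * y i) ^ 2) / (∑ i, (b i * y i) ^ 2) ≤ g ^ 2 / m ^ 2 := by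
  set S := ∑ i, y i ^ 2
  rcases (Finset.sum_nonneg fun i _ => sq_nonneg (y i) : 0 ≤ S).eq_or_lt with hS | hS
  · have hy (i : ι) : y i = 0 := by
      simpa using (Finset.sum_eq_zero_iff_of_nonneg fun i _ => sq_nonneg (y i)).1 hS.symm i
    simp only [hy, mul_zero, zero_pow two_ne_zero, Finset.sum_const_zero, div_zero]
    positivity
  have hnum : ∑ i, (a i * y i) ^ 2 ≤ g ^ 2 * S := by
    rw [Finset.mul_sum]
    refine Finset.sum_le_sum fun i _ => ?_
    rw [mul_pow, ← sq_abs (a i)]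
    gcongr
    exact ha i
  have hden : m ^ 2 * S ≤ ∑ i, (b i * y i) ^ 2 := by
    rw [Finset.mul_sum]
    refine Finset.sum_le_sum fun i _ => ?_
    rw [mul_pow]
    gcongr
    exact hb i
  calc _ ≤ g ^ 2 * S / (m ^ 2 * S) := div_le_div₀ (by positivity) hnum (by positivity) hden
    _ = g ^ 2 / m ^ 2 := mul_div_mul_right _ _ hS.ne'

theorem stmt_13_general {n : ℕ} (L : Matrix (Fin n) (Fin n) ℝ)
    (hL : L.PosSemidef) (hspec : ∀ μ ∈ spectrum ℝ L, μ ≤ 2)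
    (τ : ℝ) (hτ : 0 ≤ τ) (K : ℕ) (hK : (K : ℝ) > τ / 2 - 1)
    (x : Fin n → ℝ) :
    (∑ i, ((NormedSpace.exp ((-τ) • L) - Polynomial.aeval L (chebTruncPoly τ K)).mulVec x i) ^ 2) /
      (∑ i, ((NormedSpace.exp ((-τ) • L)).mulVec x i) ^ 2) ≤
        gBound K τ ^ 2 * Real.exp (4 * τ) := by
  have hH : L.IsHermitian := hL.1
  have hd₀ (i : Fin n) : 0 ≤ hH.eigenvalues i := hL.eigenvalues_nonneg i
  have hd₂ (i : Fin n) : hH.eigenvalues i ≤ 2 := hspec _ (hH.eigenvalues_mem_spectrum_real i)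
  rw [hH.exp_smul_eq_cfc, ← cfc_polynomial (chebTruncPoly τ K) L hH.isSelfAdjoint,
    ← cfc_sub (fun μ => exp (-τ * μ)) (chebTruncPoly τ K).eval, hH.sum_sq_cfc_mulVec,
    hH.sum_sq_cfc_mulVec]
  calc _ ≤ gBound K τ ^ 2 / exp (-τ * 2) ^ 2 :=
        sum_sq_mul_div_sum_sq_mul_le (exp_pos _)
          (fun i => abs_exp_neg_mul_sub_eval_chebTruncPoly_le hτ hK (hd₀ i) (hd₂ i))
          (fun i => exp_le_exp.2 (by nlinarith [hd₂ i]))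
    _ = gBound K τ ^ 2 * exp (4 * τ) := by
        rw [← exp_nat_mul, div_eq_mul_inv, ← Real.exp_neg]; ring_nf

theorem stmt_13 {n : ℕ} (L : Matrix (Fin n) (Fin n) ℝ)
    (hL : L.PosSemidef) (hspec : ∀ μ ∈ spectrum ℝ L, μ ≤ 2)
    (τ : ℝ) (hτ : 0 ≤ τ) (K : ℕ) (hK : (K : ℝ) > τ / 2 - 1)
    (x : Fin n → ℝ) (hx : x ≠ 0) :
    (∑ i, ((NormedSpace.exp ((-τ) • L) - Polynomial.aeval L (chebTruncPoly τ K)).mulVec x i) ^ 2) /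
      (∑ i, ((NormedSpace.exp ((-τ) • L)).mulVec x i) ^ 2) ≤
        gBound K τ ^ 2 * Real.exp (4 * τ) :=
  stmt_13_general L hL hspec τ hτ K hK x
end
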